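/- Let V and W be absolute matrix order unit spaces satisfying (T), and let φ : V → W be a completely |·|-preserving linear map with φ(e_V) an order projection in W. Then there is a unique group homomorphism K₀(φ) : K₀(V) → K₀(W) satisfying K₀(φ)([(p, 0)]) = [(φ(p), 0)] for every order projection p ∈ 𝒪𝒫_∞(V). Moreover K₀(id_V) = id_{K₀(V)}, and K₀(ψ ∘ φ) = K₀(ψ) ∘ K₀(φ) for unital completely |·|-preserving maps. -/

import Mathlib

noncomputable section

open scoped Matrix.Norms.L2Operator

/-! ### The *-algebra 𝔉 of ∞×∞ complex matrices with finitely many nonzero entries -/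

/-- `∞ × ∞` complex matrices (indexed by `ℕ × ℕ`). -/
abbrev FMat := ℕ → ℕ → ℂ

/-- The matrix has (at most) finitely many nonzero entries: it is supported in some
`n × n` top-left block. -/
def IsFin (a : FMat) : Prop := ∃ n, ∀ i j, (n ≤ i ∨ n ≤ j) → a i j = 0

/-- Matrix multiplication in `𝔉` (the `tsum` is a finite sum for finitely supported
matrices). -/
def fmul (a b : FMat) : FMat := fun i k => ∑' j, a i j * b j k

/-- The involution (conjugate transpose) on `𝔉`. -/
def fstar (a : FMat) : FMat := fun i j => starRingEnd ℂ (a j i)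

/-- The matrix unit `𝔢_{i,j}`. -/
def eUnit (i j : ℕ) : FMat := fun k l => if k = i ∧ l = j then 1 else 0

/-- `𝔍ₙ = Σ_{i<n} 𝔢_{i,i}`, the partial identities. -/
def JMat (n : ℕ) : FMat := fun k l => if k = l ∧ k < n then 1 else 0

/-- `𝔎ₙ = Σ_{i<n} 𝔢_{i,n+i}`, used for `2×2`-block constructions. -/
def KMat (n : ℕ) : FMat := fun k l => if l = k + n ∧ k < n then 1 else 0

/-- The diagonal idempotent `Σ_{i ∈ s} 𝔢_{i,i}` associated to a finite set `s ⊂ ℕ`. -/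
def finsetDiag (s : Finset ℕ) : FMat := fun k l => if k = l ∧ k ∈ s then 1 else 0

/-- The operator norm on `𝔉`: the supremum of the (C*-algebra) operator norms of the
finite top-left blocks (for a finitely supported matrix the blocks stabilize). -/
def fnorm (a : FMat) : ℝ :=
  ⨆ n : ℕ, ‖(Matrix.of fun i j : Fin n => a i j : Matrix (Fin n) (Fin n) ℂ)‖

/-- The order `o(𝔞)` of a finitely supported matrix: the least `n` such that `𝔞` is
supported in the top-left `n × n` block. -/
def matOrd (a : FMat) : ℕ := sInf {n | ∀ i j, (n ≤ i ∨ n ≤ j) → a i j = 0}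

/-- A local unitary in `𝔉`: `𝔞*𝔞 = 𝔍_{o(𝔞)} = 𝔞𝔞*`. -/
def IsLocalUnitary (a : FMat) : Prop :=
  IsFin a ∧ fmul (fstar a) a = JMat (matOrd a) ∧ fmul a (fstar a) = JMat (matOrd a)

/-! ### Non-degenerate *-𝔉-bimodules -/

/-- A non-degenerate `*`-`𝔉`-bimodule structure on a complex vector space `V`:
left and right actions of (finitely supported) infinite matrices together with an
involution, compatible with each other and with the complex scalars, such that every
element is `𝔍ₙ·v·𝔍ₙ` for some `n`. -/
structure FBimod (V : Type*) [AddCommGroup V] [Module ℂ V] where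
  lsmul : FMat → V → V
  rsmul : V → FMat → V
  star : V → V
  lsmul_add : ∀ a u v, lsmul a (u + v) = lsmul a u + lsmul a v
  rsmul_add : ∀ u v b, rsmul (u + v) b = rsmul u b + rsmul v b
  add_lsmul : ∀ a b v, IsFin a → IsFin b → lsmul (a + b) v = lsmul a v + lsmul b v
  rsmul_add' : ∀ v a b, IsFin a → IsFin b → rsmul v (a + b) = rsmul v a + rsmul v b
  smul_lsmul : ∀ (c : ℂ) a v, IsFin a → lsmul (c • a) v = c • lsmul a v
  smul_rsmul : ∀ (c : ℂ) v a, IsFin a → rsmul v (c • a) = c • rsmul v a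
  mul_lsmul : ∀ a b v, IsFin a → IsFin b → lsmul (fmul a b) v = lsmul a (lsmul b v)
  rsmul_mul : ∀ v a b, IsFin a → IsFin b → rsmul v (fmul a b) = rsmul (rsmul v a) b
  lsmul_rsmul : ∀ a v b, IsFin a → IsFin b → rsmul (lsmul a v) b = lsmul a (rsmul v b)
  star_add : ∀ u v, star (u + v) = star u + star v
  star_star : ∀ v, star (star v) = v
  star_lsmul : ∀ a v, IsFin a → star (lsmul a v) = rsmul (star v) (fstar a)
  star_rsmul : ∀ v a, IsFin a → star (rsmul v a) = lsmul (fstar a) (star v)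
  smul_compat : ∀ (c : ℂ) (n : ℕ) v, lsmul (JMat n) (rsmul v (JMat n)) = v →
    lsmul (c • JMat n) v = c • v
  nondeg : ∀ v, ∃ n, lsmul (JMat n) (rsmul v (JMat n)) = v

namespace FBimod

variable {V : Type*} [AddCommGroup V] [Module ℂ V] (M : FBimod V)

/-- `𝔍ₙ 𝔳 𝔍ₙ`. -/
def cut (n : ℕ) (v : V) : V := M.lsmul (JMat n) (M.rsmul v (JMat n))

/-- The order `o(𝔳)`: the smallest `n` with `𝔍ₙ 𝔳 𝔍ₙ = 𝔳`. -/
def ord (v : V) : ℕ := sInf {n | M.cut n v = v}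

/-- `𝔞* 𝔳 𝔞`. -/
def conj (a : FMat) (v : V) : V := M.lsmul (fstar a) (M.rsmul v a)

/-- `C` is a bimodule cone: consists of self-adjoint elements, is closed under
addition and under `𝔳 ↦ 𝔞*𝔳𝔞` for `𝔞 ∈ 𝔉`. -/
def IsCone (C : Set V) : Prop :=
  (∀ v ∈ C, M.star v = v) ∧ (∀ u ∈ C, ∀ v ∈ C, u + v ∈ C) ∧
    (∀ v ∈ C, ∀ a : FMat, IsFin a → M.conj a v ∈ C)

/-- The cone `C` is proper: `C ∩ (−C) = {0}`. -/
def ConeProper (C : Set V) : Prop := ∀ v ∈ C, -v ∈ C → v = 0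

/-- The cone `C` is Archimedean. -/
def ConeArch (C : Set V) : Prop :=
  ∀ u ∈ C, ∀ v : V, M.star v = v → (∀ k : ℝ, 0 < k → (k : ℂ) • u + v ∈ C) → v ∈ C

/-- The cone `C` is generating. -/
def ConeGen (C : Set V) : Prop :=
  ∀ v : V, ∃ v₀ ∈ C, ∃ v₁ ∈ C, ∃ v₂ ∈ C, ∃ v₃ ∈ C,
    v = v₀ + Complex.I • v₁ - v₂ - Complex.I • v₃

/-- `(𝔳₁, 𝔳₂)ₙ⁺ = 𝔳₁ + 𝔎ₙ* 𝔳₂ 𝔎ₙ` (the diagonal `2×2`-block `diag(𝔳₁,𝔳₂)`). -/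
def pairPlus (n : ℕ) (v₁ v₂ : V) : V :=
  v₁ + M.lsmul (fstar (KMat n)) (M.rsmul v₂ (KMat n))

/-- `saₙ(𝔳) = 𝔍ₙ 𝔳 𝔎ₙ + 𝔎ₙ* 𝔳* 𝔍ₙ` (the off-diagonal `2×2`-block of `𝔳`). -/
def san (n : ℕ) (v : V) : V :=
  M.lsmul (JMat n) (M.rsmul v (KMat n)) +
    M.lsmul (fstar (KMat n)) (M.rsmul (M.star v) (JMat n))

/-- `𝔲` and `𝔳` are `𝔉`-independent: compressed onto disjoint diagonal blocks. -/
def FIndep (u v : V) : Prop :=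
  ∃ I J : Finset ℕ, Disjoint I J ∧
    M.lsmul (finsetDiag I) (M.rsmul u (finsetDiag I)) = u ∧
    M.lsmul (finsetDiag J) (M.rsmul v (finsetDiag J)) = v

/-- `(𝔙, C, abs)` is a non-degenerate absolutely ordered `𝔉`-bimodule
(Definition 18 of the paper). -/
structure IsAbsOrd (C : Set V) (abs : V → V) : Prop where
  cone : M.IsCone C
  abs_mem : ∀ v, abs v ∈ C
  ord_abs_le : ∀ v, M.ord (abs v) ≤ M.ord v
  abs_of_mem : ∀ v ∈ C, abs v = v
  pos_part : ∀ v, M.pairPlus (M.ord v) (abs (M.star v)) (abs v) + M.san (M.ord v) v ∈ C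
  abs_smul_le : ∀ (a b : FMat), IsFin a → IsFin b → ∀ v,
    (fnorm a : ℂ) • abs (M.rsmul (abs v) b) - abs (M.lsmul a (M.rsmul v b)) ∈ C
  indep_add : ∀ u v, M.FIndep u v → abs (u + v) = abs u + abs v
  absorb : ∀ u ∈ C, ∀ v ∈ C, ∀ w ∈ C, abs (u - v) = u + v → v - w ∈ C →
    abs (u - w) = u + w
  ortho_pm : ∀ u ∈ C, ∀ v ∈ C, ∀ w ∈ C, abs (u - v) = u + v → abs (u - w) = u + w →
    abs (u - abs (v + w)) = u + abs (v + w) ∧ abs (u - abs (v - w)) = u + abs (v - w)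

/-- `eⁿ = Σ_{i<n} 𝔢_{i,0} 𝔢 𝔢_{0,i}` for an element `𝔢` of order `1`. -/
def epow (e : V) (n : ℕ) : V :=
  ∑ i ∈ Finset.range n, M.lsmul (eUnit i 0) (M.rsmul e (eUnit 0 i))

/-- `𝔢` is a local order unit for `(𝔙, C)`. -/
def IsLocalOrderUnit (C : Set V) (e : V) : Prop :=
  e ∈ C ∧ M.cut 1 e = e ∧ ∀ v : V, M.cut 1 v = v → ∃ k : ℝ, 0 < k ∧
    M.pairPlus 1 ((k : ℂ) • e) ((k : ℂ) • e) + M.san 1 v ∈ C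

/-- `(𝔙, C, 𝔢)` is a local `𝔉`-order unit bimodule. -/
def IsLocalUnitBimod (C : Set V) (e : V) : Prop :=
  M.IsCone C ∧ ConeProper C ∧ M.ConeArch C ∧ M.IsLocalOrderUnit C e

/-- The norm associated to a local order unit:
`‖𝔳‖ = inf { k > 0 : (k𝔢^{o(𝔳)}, k𝔢^{o(𝔳)})⁺_{o(𝔳)} + sa_{o(𝔳)}(𝔳) ∈ C }`. -/
def lnorm (C : Set V) (e : V) (v : V) : ℝ :=
  sInf {k : ℝ | 0 < k ∧
    M.pairPlus (M.ord v) ((k : ℂ) • M.epow e (M.ord v)) ((k : ℂ) • M.epow e (M.ord v)) +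
      M.san (M.ord v) v ∈ C}

/-- `𝔲 ⊥_∞ 𝔳` with respect to the local-order-unit norm. -/
def PerpInf (C : Set V) (e : V) (u v : V) : Prop :=
  ∀ k₁ k₂ : ℝ, M.lnorm C e ((k₁ : ℂ) • u + (k₂ : ℂ) • v) =
    max (M.lnorm C e ((k₁ : ℂ) • u)) (M.lnorm C e ((k₂ : ℂ) • v))

end FBimod
/-! ### Matrices over a complex *-vector space -/

section MatrixLevel

variable {V : Type*} [AddCommGroup V] [Module ℂ V] [StarAddMonoid V] [StarModule ℂ V]

/-- Conjugate transpose of a rectangular matrix over a `*`-vector space. -/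
def mstar {m n : ℕ} (v : Matrix (Fin m) (Fin n) V) : Matrix (Fin n) (Fin m) V :=
  fun i j => star (v j i)

/-- Left action of a scalar matrix: `(a v)_{ij} = Σ_k a_{ik} v_{kj}`. -/
def aSmul {r m n : ℕ} (a : Matrix (Fin r) (Fin m) ℂ) (v : Matrix (Fin m) (Fin n) V) :
    Matrix (Fin r) (Fin n) V :=
  fun i j => ∑ k, a i k • v k j

/-- Right action of a scalar matrix: `(v b)_{ij} = Σ_k b_{kj} • v_{ik}`. -/
def smulB {m n s : ℕ} (v : Matrix (Fin m) (Fin n) V) (b : Matrix (Fin n) (Fin s) ℂ) :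
    Matrix (Fin m) (Fin s) V :=
  fun i j => ∑ k, b k j • v i k

/-- Direct sum (block diagonal) of rectangular matrices over `V`. -/
def dsum {m n r s : ℕ} (v : Matrix (Fin m) (Fin n) V) (w : Matrix (Fin r) (Fin s) V) :
    Matrix (Fin (m + r)) (Fin (n + s)) V :=
  fun i j =>
    if hi : (i : ℕ) < m then
      (if hj : (j : ℕ) < n then v ⟨i, hi⟩ ⟨j, hj⟩ else 0)
    else
      (if hj : (j : ℕ) < n then 0
       else w ⟨(i : ℕ) - m, by have := i.isLt; omega⟩ ⟨(j : ℕ) - n, by have := j.isLt; omega⟩)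

end MatrixLevel

/-- The L2-operator norm of a rectangular complex scalar matrix. -/
def cnorm {r m : ℕ} (a : Matrix (Fin r) (Fin m) ℂ) : ℝ := ‖a‖

/-- Embedding of a finite rectangular complex matrix into `𝔉`. -/
def embC {r m : ℕ} (a : Matrix (Fin r) (Fin m) ℂ) : FMat :=
  fun i j => if hi : i < r then (if hj : j < m then a ⟨i, hi⟩ ⟨j, hj⟩ else 0) else 0

/-- `e ⊕ ⋯ ⊕ e`: the diagonal matrix with constant diagonal `e`. -/
def diagE {V : Type*} [AddCommGroup V] (e : V) (n : ℕ) : Matrix (Fin n) (Fin n) V :=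
  Matrix.of fun i j => if i = j then e else 0

/-! ### Absolutely matrix ordered spaces and absolute matrix order unit spaces -/

/-- An absolutely matrix ordered space structure on a complex `*`-vector space `V`:
matrix cones `Mₙ(V)⁺` and absolute values `|·|_{m,n} : M_{m,n}(V) → Mₙ(V)⁺`
(Definition 4.1 of Karn-Kumar). -/
structure AMOS (V : Type*) [AddCommGroup V] [Module ℂ V] [StarAddMonoid V]
    [StarModule ℂ V] where
  pos : ∀ n : ℕ, Set (Matrix (Fin n) (Fin n) V)
  abs : ∀ m n : ℕ, Matrix (Fin m) (Fin n) V → Matrix (Fin n) (Fin n) V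
  pos_star : ∀ n, ∀ v ∈ pos n, mstar v = v
  pos_add : ∀ n, ∀ u ∈ pos n, ∀ v ∈ pos n, u + v ∈ pos n
  pos_conj : ∀ m n (a : Matrix (Fin n) (Fin m) ℂ), ∀ v ∈ pos n,
    aSmul a.conjTranspose (smulB v a) ∈ pos m
  abs_mem : ∀ m n v, abs m n v ∈ pos n
  abs_of_pos : ∀ n, ∀ v ∈ pos n, abs n n v = v
  abs_add_self : ∀ n (v : Matrix (Fin n) (Fin n) V), mstar v = v →
    abs n n v + v ∈ pos n ∧ abs n n v - v ∈ pos n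
  abs_real_smul : ∀ n (k : ℝ) (v : Matrix (Fin n) (Fin n) V), mstar v = v →
    abs n n ((k : ℂ) • v) = ((|k| : ℝ) : ℂ) • abs n n v
  absorb : ∀ n, ∀ u ∈ pos n, ∀ v ∈ pos n, ∀ w ∈ pos n,
    abs n n (u - v) = u + v → v - w ∈ pos n → abs n n (u - w) = u + w
  ortho_pm : ∀ n, ∀ u ∈ pos n, ∀ v ∈ pos n, ∀ w ∈ pos n,
    abs n n (u - v) = u + v → abs n n (u - w) = u + w →
    abs n n (u - abs n n (v + w)) = u + abs n n (v + w) ∧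
      abs n n (u - abs n n (v - w)) = u + abs n n (v - w)
  abs_smul_le : ∀ (r m n s : ℕ) (α : Matrix (Fin r) (Fin m) ℂ)
    (v : Matrix (Fin m) (Fin n) V) (β : Matrix (Fin n) (Fin s) ℂ),
    (cnorm α : ℂ) • abs n s (smulB (abs m n v) β) - abs r s (aSmul α (smulB v β)) ∈ pos s
  abs_dsum : ∀ (m n r s : ℕ) (v : Matrix (Fin m) (Fin n) V) (w : Matrix (Fin r) (Fin s) V),
    abs (m + r) (n + s) (dsum v w) = dsum (abs m n v) (abs r s w)

/-- A matrix order unit structure on top of an absolutely matrix ordered space: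
an order unit `e` with `V⁺` proper and each `Mₙ(V)⁺` Archimedean. -/
structure AMOUS (V : Type*) [AddCommGroup V] [Module ℂ V] [StarAddMonoid V]
    [StarModule ℂ V] extends AMOS V where
  e : V
  e_pos : diagE e 1 ∈ pos 1
  proper : ∀ v ∈ pos 1, -v ∈ pos 1 → v = 0
  arch : ∀ n (v : Matrix (Fin n) (Fin n) V), mstar v = v →
    (∀ k : ℝ, 0 < k → (k : ℂ) • diagE e n + v ∈ pos n) →
    v ∈ pos n
  unit : ∀ n (v : Matrix (Fin n) (Fin n) V), mstar v = v →
    ∃ k : ℝ, 0 < k ∧ (k : ℂ) • diagE e n - v ∈ pos n ∧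
      (k : ℂ) • diagE e n + v ∈ pos n

namespace AMOUS

variable {V : Type*} [AddCommGroup V] [Module ℂ V] [StarAddMonoid V] [StarModule ℂ V]
variable (A : AMOUS V)

/-- `eⁿ = e ⊕ ⋯ ⊕ e ∈ Mₙ(V)`. -/
def eN (n : ℕ) : Matrix (Fin n) (Fin n) V := diagE A.e n

/-- The `2n × 2n` matrix `[[a, b], [c, d]]` of `n × n` blocks. -/
def block2 {n : ℕ} (a b c d : Matrix (Fin n) (Fin n) V) :
    Matrix (Fin (n + n)) (Fin (n + n)) V :=
  fun i j =>
    if hi : (i : ℕ) < n then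
      (if hj : (j : ℕ) < n then a ⟨i, hi⟩ ⟨j, hj⟩
       else b ⟨i, hi⟩ ⟨(j : ℕ) - n, by have := j.isLt; omega⟩)
    else
      (if hj : (j : ℕ) < n then c ⟨(i : ℕ) - n, by have := i.isLt; omega⟩ ⟨j, hj⟩
       else d ⟨(i : ℕ) - n, by have := i.isLt; omega⟩ ⟨(j : ℕ) - n, by have := j.isLt; omega⟩)

end AMOUS
namespace AMOUS

variable {V : Type*} [AddCommGroup V] [Module ℂ V] [StarAddMonoid V] [StarModule ℂ V]
variable (A : AMOUS V)

/-- The matrix norms of a matrix order unit space: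
`‖v‖ₙ = inf { k > 0 : [[k eⁿ, v], [v*, k eⁿ]] ∈ M₂ₙ(V)⁺ }`. -/
def mnorm (n : ℕ) (v : Matrix (Fin n) (Fin n) V) : ℝ :=
  sInf {k : ℝ | 0 < k ∧
    block2 ((k : ℂ) • A.eN n) v (mstar v) ((k : ℂ) • A.eN n) ∈ A.pos (n + n)}

/-- Orthogonality `u ⊥ v` (for positive elements): `|u − v| = u + v`. -/
def Perp {n : ℕ} (u v : Matrix (Fin n) (Fin n) V) : Prop :=
  A.abs n n (u - v) = u + v

/-- `u ⊥_∞ v`: `‖k₁ u + k₂ v‖ = max {‖k₁ u‖, ‖k₂ v‖}` for all real `k₁, k₂`. -/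
def PerpInfM {n : ℕ} (u v : Matrix (Fin n) (Fin n) V) : Prop :=
  ∀ k₁ k₂ : ℝ, A.mnorm n ((k₁ : ℂ) • u + (k₂ : ℂ) • v) =
    max (A.mnorm n ((k₁ : ℂ) • u)) (A.mnorm n ((k₂ : ℂ) • v))

/-- `u ⊥_∞^a v`: absolute `∞`-orthogonality. -/
def PerpInfA {n : ℕ} (u v : Matrix (Fin n) (Fin n) V) : Prop :=
  ∀ u₁ ∈ A.pos n, ∀ v₁ ∈ A.pos n, u - u₁ ∈ A.pos n → v - v₁ ∈ A.pos n → A.PerpInfM u₁ v₁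

/-- `(V, {Mₙ(V)⁺}, {|·|}, e)` is an absolute matrix order unit space:
`⊥ = ⊥_∞^a` on each `Mₙ(V)⁺`. -/
def IsAbsolute : Prop :=
  ∀ n, ∀ u ∈ A.pos n, ∀ v ∈ A.pos n, (A.Perp u v ↔ A.PerpInfA u v)

/-- `p` is an order projection in `Mₙ(V)`: `p* = p` and `|2p − eⁿ| = eⁿ`. -/
def IsOP (n : ℕ) (p : Matrix (Fin n) (Fin n) V) : Prop :=
  mstar p = p ∧ A.abs n n ((2 : ℂ) • p - A.eN n) = A.eN n

/-- `v ∈ M_{m,n}(V)` is a partial isometry: `|v|` and `|v*|` are order projections. -/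
def IsPI {m n : ℕ} (v : Matrix (Fin m) (Fin n) V) : Prop :=
  A.IsOP n (A.abs m n v) ∧ A.IsOP m (A.abs n m (mstar v))

end AMOUS

/-- An element of `M_∞(V)`: a matrix at some level `n`. -/
def OPE (V : Type*) : Type _ := Σ n : ℕ, Matrix (Fin n) (Fin n) V

namespace OPE

variable {V : Type*} [AddCommGroup V] [Module ℂ V] [StarAddMonoid V] [StarModule ℂ V]

/-- Direct sum in `M_∞(V)`. -/
def d (p q : OPE V) : OPE V := ⟨p.1 + q.1, dsum p.2 q.2⟩

/-- The zero order projection (at level 1). -/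
def zero (V : Type*) [AddCommGroup V] : OPE V := ⟨1, 0⟩

end OPE

namespace AMOUS

variable {V : Type*} [AddCommGroup V] [Module ℂ V] [StarAddMonoid V] [StarModule ℂ V]
variable (A : AMOUS V)

/-- Membership in `𝒪𝒫_∞(V)`. -/
def IsOPE (p : OPE V) : Prop := A.IsOP p.1 p.2

/-- `eⁿ` as an element of `𝒪𝒫_∞(V)`. -/
def eOPE (n : ℕ) : OPE V := ⟨n, A.eN n⟩

/-- Partial isometric equivalence `p ∼ q` of order projections: there is a partial
isometry `v` with `p = |v*|` and `q = |v|`. -/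
def Sim (p q : OPE V) : Prop :=
  ∃ v : Matrix (Fin p.1) (Fin q.1) V,
    A.IsPI v ∧ p.2 = A.abs q.1 p.1 (mstar v) ∧ q.2 = A.abs p.1 q.1 v

/-- Condition (T). -/
def CondT : Prop :=
  ∀ (m n l : ℕ) (u : Matrix (Fin m) (Fin n) V) (v : Matrix (Fin l) (Fin n) V),
    A.IsPI u → A.IsPI v → A.abs m n u = A.abs l n v →
    ∃ w : Matrix (Fin m) (Fin l) V, A.IsPI w ∧
      A.abs l m (mstar w) = A.abs n m (mstar u) ∧ A.abs m l w = A.abs n l (mstar v)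

/-- Stabilized equivalence `p ≈ q`: `p ⊕ r ∼ q ⊕ r` for some order projection `r`. -/
def ASim (p q : OPE V) : Prop := ∃ r : OPE V, A.IsOPE r ∧ A.Sim (p.d r) (q.d r)

/-- A pair of order projections, representing an element `[(p,q)]` of `K₀(V)`. -/
def IsOPPair (x : OPE V × OPE V) : Prop := A.IsOPE x.1 ∧ A.IsOPE x.2

/-- The relation `(p₁,q₁) ≡ (p₂,q₂) ↔ p₁ ⊕ q₂ ≈ p₂ ⊕ q₁` defining `K₀(V)`. -/
def Krel (x y : OPE V × OPE V) : Prop := A.ASim (x.1.d y.2) (y.1.d x.2)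

/-- Addition of representatives of `K₀(V)` classes. -/
def kadd (x y : OPE V × OPE V) : OPE V × OPE V := (x.1.d y.1, x.2.d y.2)

/-- The representative of the zero class of `K₀(V)`. -/
def kzero : OPE V × OPE V := (OPE.zero V, OPE.zero V)

/-- Representative-level membership in the cone `K₀(V)⁺ = {[(p,0)] : p ∈ 𝒪𝒫_∞(V)}`. -/
def KPos (x : OPE V × OPE V) : Prop :=
  ∃ p : OPE V, A.IsOPE p ∧ A.Krel x (p, OPE.zero V)

/-- Representative-level order `[x] ≤ [y]` in `K₀(V)`: `[y] − [x] ∈ K₀(V)⁺`. -/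
def Kle (x y : OPE V × OPE V) : Prop :=
  ∃ r : OPE V, A.IsOPE r ∧ A.Krel (kadd x (r, OPE.zero V)) y

/-- The order projection `p ∈ Mₙ(V)` is finite: `q ∼ p` and `q ≥ p` imply `q = p`. -/
def FiniteOP (n : ℕ) (p : Matrix (Fin n) (Fin n) V) : Prop :=
  ∀ q : Matrix (Fin n) (Fin n) V, A.IsOP n q → A.Sim ⟨n, q⟩ ⟨n, p⟩ →
    q - p ∈ A.pos n → q = p

end AMOUS

/-! ### Maps between absolute matrix order unit spaces -/

section Maps

variable {V W : Type*} [AddCommGroup V] [Module ℂ V] [StarAddMonoid V] [StarModule ℂ V]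
  [AddCommGroup W] [Module ℂ W] [StarAddMonoid W] [StarModule ℂ W]

/-- The amplification `φₙ` (entrywise application) of a map. -/
def mmap (φ : V →ₗ[ℂ] W) {m n : ℕ} (v : Matrix (Fin m) (Fin n) V) :
    Matrix (Fin m) (Fin n) W :=
  fun i j => φ (v i j)

/-- `φ` is completely `|·|`-preserving: every amplification `φₙ` is `|·|`-preserving. -/
def CAbsPres (A : AMOUS V) (B : AMOUS W) (φ : V →ₗ[ℂ] W) : Prop :=
  ∀ (n : ℕ) (v : Matrix (Fin n) (Fin n) V), B.abs n n (mmap φ v) = mmap φ (A.abs n n v)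

/-- `φ` and `ψ` are completely orthogonal: `φₙ(u) ⊥ ψₙ(v)` for all positive `u, v`. -/
def COrth (A : AMOUS V) (B : AMOUS W) (φ ψ : V →ₗ[ℂ] W) : Prop :=
  ∀ (n : ℕ) (u v : Matrix (Fin n) (Fin n) V), u ∈ A.pos n → v ∈ A.pos n →
    B.Perp (mmap φ u) (mmap ψ v)

/-- The image of an element of `M_∞(V)` under (the amplifications of) `φ`. -/
def mmapOPE (φ : V →ₗ[ℂ] W) (p : OPE V) : OPE W := ⟨p.1, mmap φ p.2⟩

/-- `F` represents a group homomorphism `K₀(V) → K₀(W)` making the `K₀` diagram of `φ`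
commute: it maps `K₀`-representatives to `K₀`-representatives, respects the defining
relation `≡`, is additive, and satisfies `F([(p, 0)]) = [(φ(p), 0)]`. -/
def K0HomProp (A : AMOUS V) (B : AMOUS W) (φ : V →ₗ[ℂ] W)
    (F : OPE V × OPE V → OPE W × OPE W) : Prop :=
  (∀ x, A.IsOPPair x → B.IsOPPair (F x)) ∧
  (∀ x y, A.IsOPPair x → A.IsOPPair y → A.Krel x y → B.Krel (F x) (F y)) ∧
  (∀ x y, A.IsOPPair x → A.IsOPPair y → B.Krel (F (AMOUS.kadd x y)) (AMOUS.kadd (F x) (F y))) ∧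
  (∀ p : OPE V, A.IsOPE p → B.Krel (F (p, OPE.zero V)) (mmapOPE φ p, OPE.zero W))

/-- The completely bounded norm of `φ` with respect to the order unit matrix norms. -/
def cbNorm (A : AMOUS V) (B : AMOUS W) (φ : V →ₗ[ℂ] W) : ℝ :=
  ⨆ n : ℕ, sInf {c : ℝ | 0 ≤ c ∧
    ∀ v : Matrix (Fin n) (Fin n) V, B.mnorm n (mmap φ v) ≤ c * A.mnorm n v}

end Maps

/-!
Complete `|·|`-preservation makes `φ` send partial isometries to partial isometries and order
projections to order projections: `φ(p)` satisfies `|2φ(p) − φ(eⁿ)| = φ(eⁿ)` for the order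
projection `φ(eⁿ)`, and this forces `|2φ(p) − eⁿ| = eⁿ`. So `(p, q) ↦ (φ(p), φ(q))` respects
`∼`, `≈` and the relation defining `K₀`, and represents `K₀(φ)`. Condition (T) makes `∼`
transitive, so the relation defining `K₀` is transitive and cancellative; then every
homomorphism `G` with `G[(p,0)] = [(φ(p),0)]` satisfies `G[(p,q)] + [(φ(q),0)] = [(φ(p),0)]`,
which determines it. The identity and composition laws follow from this uniqueness.
-/

open scoped Matrix

section DirectSum

variable {V : Type*} [AddCommGroup V]

theorem dsum_sub {m n r s : ℕ} (v v' : Matrix (Fin m) (Fin n) V) (w w' : Matrix (Fin r) (Fin s) V) :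
    dsum (v - v') (w - w') = dsum v w - dsum v' w' := by
  ext i j; simp only [dsum, Matrix.sub_apply]; split_ifs <;> simp

theorem dsum_inj {m n r s : ℕ} {v v' : Matrix (Fin m) (Fin n) V}
    {w w' : Matrix (Fin r) (Fin s) V} : dsum v w = dsum v' w' ↔ v = v' ∧ w = w' := by
  refine ⟨fun h => ⟨?_, ?_⟩, fun ⟨hv, hw⟩ => hv ▸ hw ▸ rfl⟩
  · ext i j
    simpa [dsum] using congrFun₂ h (Fin.castAdd r i) (Fin.castAdd s j)
  · ext i j
    simpa [dsum] using congrFun₂ h (Fin.natAdd m i) (Fin.natAdd n j)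

theorem diagE_add (e : V) (m n : ℕ) : diagE e (m + n) = dsum (diagE e m) (diagE e n) := by
  ext i j
  simp only [diagE, dsum, Matrix.of_apply]
  split_ifs <;> simp_all [Fin.ext_iff]; omega

theorem coe_finAddFlip {m n : ℕ} (i : Fin (m + n)) :
    (finAddFlip i : ℕ) = if (i : ℕ) < m then n + i else i - m := by
  obtain ⟨i, hi⟩ := i
  split_ifs with h
  · rw [finAddFlip_apply_mk_left h]
  · rw [finAddFlip_apply_mk_right (not_lt.mp h)]

theorem dsum_submatrix_finAddFlip {m n r s : ℕ} (v : Matrix (Fin m) (Fin n) V)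
    (w : Matrix (Fin r) (Fin s) V) : (dsum v w).submatrix finAddFlip finAddFlip = dsum w v := by
  ext i j
  have := i.isLt; have := j.isLt
  simp only [dsum, Matrix.submatrix_apply, coe_finAddFlip]
  split_ifs <;> first | omega | (congr 1 <;> ext <;> dsimp only <;> omega)

theorem dsum_submatrix_finCongr_assoc {a b c : ℕ} (x : Matrix (Fin a) (Fin a) V)
    (y : Matrix (Fin b) (Fin b) V) (z : Matrix (Fin c) (Fin c) V) :
    (dsum (dsum x y) z).submatrix (finCongr (Nat.add_assoc a b c).symm)
      (finCongr (Nat.add_assoc a b c).symm) = dsum x (dsum y z) := by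
  ext i j
  have := i.isLt; have := j.isLt
  simp only [dsum, Matrix.submatrix_apply, finCongr_apply, Fin.val_cast]
  split_ifs <;> first | rfl | omega | (congr 1 <;> ext <;> dsimp only <;> omega)

variable [StarAddMonoid V]

@[simp] theorem mstar_mstar {m n : ℕ} (v : Matrix (Fin m) (Fin n) V) : mstar (mstar v) = v := by
  ext i j; simp [mstar]

theorem mstar_sub {m n : ℕ} (u v : Matrix (Fin m) (Fin n) V) :
    mstar (u - v) = mstar u - mstar v := by
  ext i j; simp [mstar]

theorem mstar_submatrix {m n m' n' : ℕ} (v : Matrix (Fin m) (Fin n) V) (f : Fin m' → Fin m)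
    (g : Fin n' → Fin n) : mstar (v.submatrix f g) = (mstar v).submatrix g f :=
  rfl

theorem mstar_dsum {m n r s : ℕ} (v : Matrix (Fin m) (Fin n) V) (w : Matrix (Fin r) (Fin s) V) :
    mstar (dsum v w) = dsum (mstar v) (mstar w) := by
  ext i j; simp only [mstar, dsum]; split_ifs <;> simp

end DirectSum

section ScalarAction

variable {V : Type*} [AddCommGroup V] [Module ℂ V]

theorem dsum_smul {m n r s : ℕ} (c : ℂ) (v : Matrix (Fin m) (Fin n) V)
    (w : Matrix (Fin r) (Fin s) V) :
    dsum (c • v) (c • w) = c • dsum v w := by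
  ext i j; simp only [dsum, Matrix.smul_apply]; split_ifs <;> simp

theorem aSmul_aSmul {r m l n : ℕ} (a : Matrix (Fin r) (Fin m) ℂ) (b : Matrix (Fin m) (Fin l) ℂ)
    (v : Matrix (Fin l) (Fin n) V) : aSmul a (aSmul b v) = aSmul (a * b) v := by
  ext i j
  simp only [aSmul, Matrix.mul_apply, Finset.smul_sum, Finset.sum_smul, smul_smul]
  exact Finset.sum_comm

@[simp] theorem aSmul_smul_one {m n : ℕ} (c : ℂ) (v : Matrix (Fin m) (Fin n) V) :
    aSmul (c • (1 : Matrix (Fin m) (Fin m) ℂ)) v = c • v := by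
  ext i j; simp [aSmul, Matrix.one_apply]

@[simp] theorem aSmul_one {m n : ℕ} (v : Matrix (Fin m) (Fin n) V) :
    aSmul (1 : Matrix (Fin m) (Fin m) ℂ) v = v := by
  simpa using aSmul_smul_one 1 v

@[simp] theorem aSmul_zero_left {r m n : ℕ} (v : Matrix (Fin m) (Fin n) V) :
    aSmul (0 : Matrix (Fin r) (Fin m) ℂ) v = 0 := by
  ext i j; simp [aSmul]

@[simp] theorem aSmul_neg {r m n : ℕ} (a : Matrix (Fin r) (Fin m) ℂ)
    (v : Matrix (Fin m) (Fin n) V) :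
    aSmul a (-v) = -aSmul a v := by
  ext i j; simp [aSmul]

theorem aSmul_toMatrix_toPEquiv {a b n : ℕ} (f : Fin a ≃ Fin b) (v : Matrix (Fin b) (Fin n) V) :
    aSmul f.toPEquiv.toMatrix v = v.submatrix f id := by
  ext i j; simp [aSmul]

@[simp] theorem smulB_smul_one {m n : ℕ} (c : ℂ) (v : Matrix (Fin m) (Fin n) V) :
    smulB v (c • (1 : Matrix (Fin n) (Fin n) ℂ)) = c • v := by
  ext i j; simp [smulB, Matrix.one_apply]

@[simp] theorem smulB_one {m n : ℕ} (v : Matrix (Fin m) (Fin n) V) :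
    smulB v (1 : Matrix (Fin n) (Fin n) ℂ) = v := by
  simpa using smulB_smul_one 1 v

@[simp] theorem smulB_neg {m n s : ℕ} (v : Matrix (Fin m) (Fin n) V)
    (b : Matrix (Fin n) (Fin s) ℂ) :
    smulB (-v) b = -smulB v b := by
  ext i j; simp [smulB]

variable [StarAddMonoid V] [StarModule ℂ V]

theorem mstar_smul {m n : ℕ} (c : ℂ) (v : Matrix (Fin m) (Fin n) V) :
    mstar (c • v) = star c • mstar v := by
  ext i j; simp [mstar]

theorem mstar_two_smul_sub {n : ℕ} {p q : Matrix (Fin n) (Fin n) V} (hp : mstar p = p)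
    (hq : mstar q = q) : mstar ((2 : ℂ) • p - q) = (2 : ℂ) • p - q := by
  rw [mstar_sub, mstar_smul, hp, hq]; norm_num

end ScalarAction

theorem Matrix.eq_zero_of_forall_sesq_self_eq_zero {V ι : Type*} [AddCommGroup V] [Module ℂ V]
    [Fintype ι] [DecidableEq ι] {x : Matrix ι ι V}
    (h : ∀ a : ι → ℂ, ∑ k, ∑ l, (star (a k) * a l) • x k l = 0) : x = 0 := by
  set S : (ι → ℂ) → (ι → ℂ) → V := fun a b => ∑ k, ∑ l, (star (a k) * b l) • x k l with hS
  have hadd : ∀ a b, S a b + S b a = 0 := fun a b => by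
    have := h (a + b)
    simp only [Pi.add_apply, star_add, add_mul, mul_add, add_smul, Finset.sum_add_distrib,
      h a, h b] at this
    rw [← this]; simp only [hS]; abel
  have hI_right : ∀ a b, S a (Complex.I • b) = Complex.I • S a b := fun a b => by
    simp only [hS, Pi.smul_apply, smul_eq_mul, Finset.smul_sum, smul_smul, mul_left_comm]
  have hI_left : ∀ a b, S (Complex.I • a) b = -Complex.I • S a b := fun a b => by
    simp only [hS, Pi.smul_apply, smul_eq_mul, Finset.smul_sum, smul_smul, Complex.star_def,
      map_mul, Complex.conj_I, mul_assoc]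
  have hS0 : ∀ a b, S a b = 0 := fun a b => by
    have h2 := hadd a (Complex.I • b)
    rw [hI_right, hI_left, neg_smul, ← smul_neg, ← smul_add, smul_eq_zero, ← sub_eq_add_neg,
      sub_eq_zero] at h2
    have h3 : (2 : ℂ) • S a b = 0 := by
      rw [two_smul]; nth_rewrite 2 [h2.resolve_left Complex.I_ne_zero]; exact hadd a b
    exact (smul_eq_zero.mp h3).resolve_left two_ne_zero
  ext i j
  simpa [hS, Pi.single_apply] using hS0 (Pi.single i 1) (Pi.single j 1)

theorem Matrix.norm_le_one_of_conjTranspose_mul_self_eq_one {m n : ℕ}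
    {γ : Matrix (Fin m) (Fin n) ℂ} (h : γᴴ * γ = 1) : ‖γ‖ ≤ 1 := by
  have hγ := Matrix.l2_opNorm_conjTranspose_mul_self γ
  have h1 := Matrix.l2_opNorm_conjTranspose_mul_self (1 : Matrix (Fin n) (Fin n) ℂ)
  rw [h] at hγ
  rw [Matrix.conjTranspose_one, one_mul] at h1
  have : ‖(1 : Matrix (Fin n) (Fin n) ℂ)‖ ≤ 1 := by
    nlinarith [norm_nonneg (1 : Matrix (Fin n) (Fin n) ℂ)]
  nlinarith [norm_nonneg γ]

theorem Equiv.conjTranspose_toMatrix_toPEquiv {a b : ℕ} (f : Fin a ≃ Fin b) :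
    (PEquiv.toMatrix f.toPEquiv : Matrix (Fin a) (Fin b) ℂ)ᴴ = PEquiv.toMatrix f.symm.toPEquiv := by
  ext i j
  simp [Matrix.conjTranspose_apply, Equiv.eq_symm_apply, eq_comm]

namespace AMOS

variable {V : Type*} [AddCommGroup V] [Module ℂ V] [StarAddMonoid V] [StarModule ℂ V]
variable (A : AMOS V)

theorem smul_mem_pos {n : ℕ} {x : Matrix (Fin n) (Fin n) V} {c : ℝ} (hc : 0 ≤ c)
    (hx : x ∈ A.pos n) : (c : ℂ) • x ∈ A.pos n := by
  have h := A.pos_conj n n ((Real.sqrt c : ℂ) • 1) x hx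
  rwa [Matrix.conjTranspose_smul, Matrix.conjTranspose_one, smulB_smul_one, Complex.star_def,
    Complex.conj_ofReal, aSmul_smul_one, smul_smul, ← Complex.ofReal_mul,
    Real.mul_self_sqrt hc] at h

theorem zero_mem_pos (n : ℕ) : (0 : Matrix (Fin n) (Fin n) V) ∈ A.pos n := by
  simpa using A.smul_mem_pos le_rfl (A.abs_mem n n 0)

theorem mem_pos_of_two_smul {n : ℕ} {x : Matrix (Fin n) (Fin n) V} (h : (2 : ℂ) • x ∈ A.pos n) :
    x ∈ A.pos n := by
  simpa [smul_smul] using A.smul_mem_pos (c := 1 / 2) (by norm_num) h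

theorem dsum_mem_pos {m n : ℕ} {u : Matrix (Fin m) (Fin m) V} {w : Matrix (Fin n) (Fin n) V}
    (hu : u ∈ A.pos m) (hw : w ∈ A.pos n) : dsum u w ∈ A.pos (m + n) := by
  have h := A.abs_mem (m + n) (m + n) (dsum u w)
  rwa [A.abs_dsum, A.abs_of_pos m u hu, A.abs_of_pos n w hw] at h

theorem diagE_mem_pos {e : V} (he : diagE e 1 ∈ A.pos 1) (n : ℕ) : diagE e n ∈ A.pos n := by
  induction n with
  | zero => simpa [Subsingleton.elim (diagE e 0) 0] using A.zero_mem_pos 0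
  | succ n ih => rw [diagE_add]; exact A.dsum_mem_pos ih he

@[simp] theorem abs_abs {m n : ℕ} (v : Matrix (Fin m) (Fin n) V) :
    A.abs n n (A.abs m n v) = A.abs m n v :=
  A.abs_of_pos n _ (A.abs_mem m n v)

theorem abs_neg {n : ℕ} {x : Matrix (Fin n) (Fin n) V} (hx : mstar x = x) :
    A.abs n n (-x) = A.abs n n x := by
  simpa using A.abs_real_smul n (-1) x hx

theorem abs_sub_abs_aSmul_mem_pos {m' m n : ℕ} {γ : Matrix (Fin m') (Fin m) ℂ} (hγ : ‖γ‖ ≤ 1)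
    (v : Matrix (Fin m) (Fin n) V) : A.abs m n v - A.abs m' n (aSmul γ v) ∈ A.pos n := by
  have h := A.abs_smul_le m' m n n γ v 1
  have h' := A.smul_mem_pos (sub_nonneg.mpr hγ) (A.abs_mem m n v)
  rw [smulB_one, smulB_one, abs_abs] at h
  convert A.pos_add n _ h _ h' using 1
  rw [cnorm, Complex.ofReal_sub, sub_smul, Complex.ofReal_one, one_smul]
  abel

end AMOS

namespace AMOUS

variable {V : Type*} [AddCommGroup V] [Module ℂ V] [StarAddMonoid V] [StarModule ℂ V]
variable (A : AMOUS V)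

theorem eq_zero_of_mem_pos_of_neg_mem_pos {n : ℕ} {x : Matrix (Fin n) (Fin n) V}
    (hx : x ∈ A.pos n) (hx' : -x ∈ A.pos n) : x = 0 := by
  refine Matrix.eq_zero_of_forall_sesq_self_eq_zero fun a => ?_
  let α : Matrix (Fin n) (Fin 1) ℂ := Matrix.of fun k _ => a k
  have h := A.proper _ (A.pos_conj 1 n α x hx)
    (by simpa only [smulB_neg, aSmul_neg] using A.pos_conj 1 n α (-x) hx')
  simpa [aSmul, smulB, α, Matrix.conjTranspose_apply, Finset.smul_sum, smul_smul]
    using congrFun₂ h 0 0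

@[simp] theorem abs_zero (m n : ℕ) : A.abs m n (0 : Matrix (Fin m) (Fin n) V) = 0 := by
  have h := A.abs_smul_le m m n n 0 0 1
  exact A.eq_zero_of_mem_pos_of_neg_mem_pos (A.abs_mem m n 0) (by simpa [cnorm] using h)

theorem abs_aSmul_of_unitary {m' m n : ℕ} {γ : Matrix (Fin m') (Fin m) ℂ} (h₁ : γᴴ * γ = 1)
    (h₂ : γ * γᴴ = 1) (v : Matrix (Fin m) (Fin n) V) :
    A.abs m' n (aSmul γ v) = A.abs m n v := by
  have hγ := Matrix.norm_le_one_of_conjTranspose_mul_self_eq_one h₁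
  have hγ' := Matrix.norm_le_one_of_conjTranspose_mul_self_eq_one (γ := γᴴ)
    (by rwa [Matrix.conjTranspose_conjTranspose])
  have hle := A.abs_sub_abs_aSmul_mem_pos hγ v
  have hge := A.abs_sub_abs_aSmul_mem_pos hγ' (aSmul γ v)
  rw [aSmul_aSmul, h₁, aSmul_one] at hge
  exact (sub_eq_zero.mp (A.eq_zero_of_mem_pos_of_neg_mem_pos hle (by rwa [neg_sub]))).symm

theorem abs_submatrix_equiv_id {a b n : ℕ} (f : Fin a ≃ Fin b) (v : Matrix (Fin b) (Fin n) V) :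
    A.abs a n (v.submatrix f id) = A.abs b n v := by
  rw [← aSmul_toMatrix_toPEquiv]
  apply A.abs_aSmul_of_unitary <;>
    simp [Equiv.conjTranspose_toMatrix_toPEquiv, ← PEquiv.toMatrix_trans, ← Equiv.toPEquiv_trans]

theorem eN_mem_pos (n : ℕ) : A.eN n ∈ A.pos n := A.diagE_mem_pos A.e_pos n

theorem mstar_eN (n : ℕ) : mstar (A.eN n) = A.eN n := A.pos_star n _ (A.eN_mem_pos n)

theorem eN_add (m n : ℕ) : A.eN (m + n) = dsum (A.eN m) (A.eN n) := diagE_add A.e m n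

variable {A}

theorem mem_pos_of_abs_two_smul_sub_eq {n : ℕ} {p q : Matrix (Fin n) (Fin n) V}
    (hp : mstar p = p) (hq : mstar q = q) (h : A.abs n n ((2 : ℂ) • p - q) = q) :
    p ∈ A.pos n ∧ q - p ∈ A.pos n := by
  obtain ⟨h₁, h₂⟩ := A.abs_add_self n _ (mstar_two_smul_sub hp hq)
  rw [h] at h₁ h₂
  refine ⟨A.mem_pos_of_two_smul ?_, A.mem_pos_of_two_smul ?_⟩
  · convert h₁ using 1; abel
  · convert h₂ using 1; rw [smul_sub, two_smul, two_smul]; abel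

theorem Perp.symm {n : ℕ} {u v : Matrix (Fin n) (Fin n) V} (h : A.Perp u v)
    (hu : mstar u = u) (hv : mstar v = v) : A.Perp v u := by
  have hneg := A.abs_neg (x := u - v) (by rw [mstar_sub, hu, hv])
  rw [neg_sub] at hneg
  rw [Perp, hneg, h, add_comm]

theorem isOP_iff_perp {n : ℕ} {p : Matrix (Fin n) (Fin n) V} :
    A.IsOP n p ↔ mstar p = p ∧ A.Perp p (A.eN n - p) := by
  rw [IsOP, Perp, show p - (A.eN n - p) = (2 : ℂ) • p - A.eN n by rw [two_smul]; abel,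
    add_sub_cancel]

theorem IsOP.mem_pos {n : ℕ} {p : Matrix (Fin n) (Fin n) V} (hp : A.IsOP n p) : p ∈ A.pos n :=
  (mem_pos_of_abs_two_smul_sub_eq hp.1 (A.mstar_eN n) hp.2).1

theorem IsOP.eN_sub_mem_pos {n : ℕ} {p : Matrix (Fin n) (Fin n) V} (hp : A.IsOP n p) :
    A.eN n - p ∈ A.pos n :=
  (mem_pos_of_abs_two_smul_sub_eq hp.1 (A.mstar_eN n) hp.2).2

theorem IsOP.abs_eq {n : ℕ} {p : Matrix (Fin n) (Fin n) V} (hp : A.IsOP n p) :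
    A.abs n n p = p :=
  A.abs_of_pos n p hp.mem_pos

variable (A) in
theorem isOP_zero (n : ℕ) : A.IsOP n 0 := by
  refine ⟨by ext; simp [mstar], ?_⟩
  rw [smul_zero, zero_sub, A.abs_neg (A.mstar_eN n), A.abs_of_pos n _ (A.eN_mem_pos n)]

theorem isOP_dsum_iff {m n : ℕ} {p : Matrix (Fin m) (Fin m) V} {q : Matrix (Fin n) (Fin n) V} :
    A.IsOP (m + n) (dsum p q) ↔ A.IsOP m p ∧ A.IsOP n q := by
  rw [IsOP, IsOP, IsOP, mstar_dsum, A.eN_add, ← dsum_smul, ← dsum_sub, A.abs_dsum, dsum_inj,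
    dsum_inj, and_and_and_comm]

theorem isOP_diagE {e : V} (he : A.IsOP 1 (diagE e 1)) (n : ℕ) : A.IsOP n (diagE e n) := by
  induction n with
  | zero => simpa [Subsingleton.elim (diagE e 0) 0] using A.isOP_zero 0
  | succ n ih => rw [diagE_add]; exact isOP_dsum_iff.mpr ⟨ih, he⟩

/-- `p ⊥ q − p` and `q ⊥ eⁿ − q` combine, by absorption and `ortho_pm`, into `p ⊥ eⁿ − p`. -/
theorem isOP_of_abs_two_smul_sub_eq {n : ℕ} {p q : Matrix (Fin n) (Fin n) V} (hq : A.IsOP n q)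
    (hp : mstar p = p) (h : A.abs n n ((2 : ℂ) • p - q) = q) : A.IsOP n p := by
  have hq_pos := hq.mem_pos
  have he_pos := hq.eN_sub_mem_pos
  have hstar_e := A.mstar_eN n
  obtain ⟨hp_pos, hqp_pos⟩ := mem_pos_of_abs_two_smul_sub_eq hp hq.1 h
  have h₁ : A.Perp p (q - p) := by
    rw [Perp, show p - (q - p) = (2 : ℂ) • p - q by rw [two_smul]; abel, add_sub_cancel, h]
  have h₂ : A.Perp (A.eN n - q) q :=
    (isOP_iff_perp.mp hq).2.symm hq.1 (by rw [mstar_sub, hstar_e, hq.1])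
  have h₃ : A.Perp p (A.eN n - q) :=
    Perp.symm (A.absorb n _ he_pos q hq_pos p hp_pos h₂ hqp_pos)
      (by rw [mstar_sub, hstar_e, hq.1]) hp
  have hep_pos : A.eN n - p ∈ A.pos n := by
    simpa only [sub_add_sub_cancel'] using A.pos_add n _ hqp_pos _ he_pos
  have h₄ := (A.ortho_pm n p hp_pos (q - p) hqp_pos (A.eN n - q) he_pos h₁ h₃).1
  rw [sub_add_sub_cancel', A.abs_of_pos n _ hep_pos] at h₄
  exact isOP_iff_perp.mpr ⟨hp, h₄⟩

variable {a b c p q r p' q' : OPE V} {x x' y y' z : OPE V × OPE V}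

variable (A) in
theorem isOPE_zero : A.IsOPE (OPE.zero V) := A.isOP_zero 1

theorem isOPE_d_iff : A.IsOPE (p.d q) ↔ A.IsOPE p ∧ A.IsOPE q := isOP_dsum_iff

theorem isOPE_d (hp : A.IsOPE p) (hq : A.IsOPE q) : A.IsOPE (p.d q) := isOPE_d_iff.mpr ⟨hp, hq⟩

theorem Sim.isOPE (h : A.Sim p q) : A.IsOPE p ∧ A.IsOPE q := by
  obtain ⟨v, hv, hp, hq⟩ := h
  exact ⟨by rw [IsOPE, hp]; exact hv.2, by rw [IsOPE, hq]; exact hv.1⟩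

theorem sim_refl (hp : A.IsOPE p) : A.Sim p p := by
  have habs : A.abs p.1 p.1 p.2 = p.2 := IsOP.abs_eq hp
  refine ⟨p.2, ⟨?_, ?_⟩, ?_, ?_⟩ <;> simp only [hp.1, habs] <;> exact hp

theorem Sim.symm (h : A.Sim p q) : A.Sim q p := by
  obtain ⟨v, hv, hp, hq⟩ := h
  exact ⟨mstar v, ⟨hv.2, by rw [mstar_mstar]; exact hv.1⟩, by rwa [mstar_mstar], hp⟩

theorem sim_of_eq_submatrix (hp : A.IsOPE p) (hq : A.IsOPE q) (f : Fin q.1 ≃ Fin p.1)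
    (h : q.2 = p.2.submatrix f f) : A.Sim p q := by
  have habs : A.abs p.1 q.1 (q.2.submatrix f.symm id) = q.2 := by
    rw [abs_submatrix_equiv_id, IsOP.abs_eq hq]
  have habs' : A.abs q.1 p.1 (mstar (q.2.submatrix f.symm id)) = p.2 := by
    rw [mstar_submatrix, hq.1, h, Matrix.submatrix_submatrix, Equiv.self_comp_symm,
      Function.comp_id, abs_submatrix_equiv_id, IsOP.abs_eq hp]
  exact ⟨_, ⟨by rw [habs]; exact hq, by rw [habs']; exact hp⟩, habs'.symm, habs.symm⟩

theorem Sim.d (h₁ : A.Sim p p') (h₂ : A.Sim q q') : A.Sim (p.d q) (p'.d q') := by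
  obtain ⟨v, hv, hp, hp'⟩ := h₁
  obtain ⟨w, hw, hq, hq'⟩ := h₂
  refine ⟨dsum v w, ⟨?_, ?_⟩, ?_, ?_⟩ <;>
    simp only [OPE.d, A.abs_dsum, mstar_dsum, isOP_dsum_iff, ← hp, ← hp', ← hq, ← hq']
  exacts [⟨hp' ▸ hv.1, hq' ▸ hw.1⟩, ⟨hp ▸ hv.2, hq ▸ hw.2⟩]

theorem sim_d_comm (hp : A.IsOPE p) (hq : A.IsOPE q) : A.Sim (p.d q) (q.d p) :=
  sim_of_eq_submatrix (isOPE_d hp hq) (isOPE_d hq hp) finAddFlip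
    (dsum_submatrix_finAddFlip p.2 q.2).symm

theorem sim_d_assoc (hp : A.IsOPE p) (hq : A.IsOPE q) (hr : A.IsOPE r) :
    A.Sim ((p.d q).d r) (p.d (q.d r)) :=
  sim_of_eq_submatrix (isOPE_d (isOPE_d hp hq) hr) (isOPE_d hp (isOPE_d hq hr)) _
    (dsum_submatrix_finCongr_assoc p.2 q.2 r.2).symm

theorem CondT.sim_trans (hT : A.CondT) (h₁ : A.Sim p q) (h₂ : A.Sim q r) : A.Sim p r := by
  obtain ⟨v, hv, hp, hq⟩ := h₁
  obtain ⟨w, hw, hq', hr⟩ := h₂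
  have hw' : A.IsPI (mstar w) := ⟨hw.2, by rw [mstar_mstar]; exact hw.1⟩
  obtain ⟨u, hu, h₁, h₂⟩ := hT p.1 q.1 r.1 v (mstar w) hv hw' (by rw [← hq, ← hq'])
  rw [mstar_mstar] at h₂
  exact ⟨u, hu, by rw [h₁, ← hp], by rw [h₂, ← hr]⟩

theorem CondT.sim_d_right_comm (hT : A.CondT) (ha : A.IsOPE a) (hb : A.IsOPE b)
    (hc : A.IsOPE c) : A.Sim ((a.d b).d c) ((a.d c).d b) :=
  hT.sim_trans (sim_d_assoc ha hb hc) <| hT.sim_trans ((sim_refl ha).d (sim_d_comm hb hc))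
    (sim_d_assoc ha hc hb).symm

theorem CondT.sim_d_d_d_comm {d : OPE V} (hT : A.CondT) (ha : A.IsOPE a) (hb : A.IsOPE b)
    (hc : A.IsOPE c) (hd : A.IsOPE d) : A.Sim ((a.d b).d (c.d d)) ((a.d c).d (b.d d)) :=
  hT.sim_trans (sim_d_assoc (isOPE_d ha hb) hc hd).symm <|
    hT.sim_trans ((hT.sim_d_right_comm ha hb hc).d (sim_refl hd))
      (sim_d_assoc (isOPE_d ha hc) hb hd)

theorem ASim.isOPE (h : A.ASim p q) : A.IsOPE p ∧ A.IsOPE q := by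
  obtain ⟨r, -, hs⟩ := h
  exact ⟨(isOPE_d_iff.mp hs.isOPE.1).1, (isOPE_d_iff.mp hs.isOPE.2).1⟩

theorem Sim.asim (h : A.Sim p q) : A.ASim p q :=
  ⟨OPE.zero V, isOPE_zero A, h.d (sim_refl (isOPE_zero A))⟩

theorem asim_refl (hp : A.IsOPE p) : A.ASim p p := (sim_refl hp).asim

theorem ASim.symm (h : A.ASim p q) : A.ASim q p := by
  obtain ⟨r, hr, hs⟩ := h
  exact ⟨r, hr, hs.symm⟩

theorem CondT.asim_d {d : OPE V} (hT : A.CondT) (h₁ : A.ASim a b) (h₂ : A.ASim c d) :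
    A.ASim (a.d c) (b.d d) := by
  obtain ⟨ha, hb⟩ := h₁.isOPE
  obtain ⟨hc, hd⟩ := h₂.isOPE
  obtain ⟨r, hr, s₁⟩ := h₁
  obtain ⟨s, hs, s₂⟩ := h₂
  exact ⟨r.d s, isOPE_d hr hs, hT.sim_trans (hT.sim_d_d_d_comm ha hc hr hs) <|
    hT.sim_trans (s₁.d s₂) (hT.sim_d_d_d_comm hb hr hd hs)⟩

theorem CondT.asim_trans (hT : A.CondT) (h₁ : A.ASim a b) (h₂ : A.ASim b c) : A.ASim a c := by
  obtain ⟨ha, hb⟩ := h₁.isOPE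
  have hc := h₂.isOPE.2
  obtain ⟨r, hr, s₁⟩ := h₁
  obtain ⟨s, hs, s₂⟩ := h₂
  refine ⟨r.d s, isOPE_d hr hs, hT.sim_trans (sim_d_assoc ha hr hs).symm ?_⟩
  refine hT.sim_trans (s₁.d (sim_refl hs)) <| hT.sim_trans (hT.sim_d_right_comm hb hr hs) ?_
  refine hT.sim_trans (s₂.d (sim_refl hr)) <| hT.sim_trans (hT.sim_d_right_comm hc hs hr) ?_
  exact sim_d_assoc hc hr hs

theorem CondT.asim_cancel_right (hT : A.CondT) (h : A.ASim (a.d c) (b.d c)) : A.ASim a b := by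
  obtain ⟨ha, hc⟩ := isOPE_d_iff.mp h.isOPE.1
  have hb := (isOPE_d_iff.mp h.isOPE.2).1
  obtain ⟨r, hr, hs⟩ := h
  exact ⟨c.d r, isOPE_d hc hr,
    hT.sim_trans (sim_d_assoc ha hc hr).symm (hT.sim_trans hs (sim_d_assoc hb hc hr))⟩

theorem Krel.isOPPair (h : A.Krel x y) : A.IsOPPair x ∧ A.IsOPPair y := by
  obtain ⟨h₁, h₂⟩ := ASim.isOPE h
  obtain ⟨hx₁, hy₂⟩ := isOPE_d_iff.mp h₁
  obtain ⟨hy₁, hx₂⟩ := isOPE_d_iff.mp h₂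
  exact ⟨⟨hx₁, hx₂⟩, hy₁, hy₂⟩

theorem krel_refl (hx : A.IsOPPair x) : A.Krel x x := asim_refl (isOPE_d hx.1 hx.2)

theorem Krel.symm (h : A.Krel x y) : A.Krel y x := ASim.symm h

theorem CondT.krel_trans (hT : A.CondT) (h₁ : A.Krel x y) (h₂ : A.Krel y z) : A.Krel x z := by
  obtain ⟨⟨hx₁, hx₂⟩, hy₁, hy₂⟩ := h₁.isOPPair
  obtain ⟨hz₁, hz₂⟩ := h₂.isOPPair.2
  -- `(x₁ ⊕ z₂) ⊕ y₂ ≈ (z₁ ⊕ x₂) ⊕ y₂`, then cancel `y₂`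
  refine hT.asim_cancel_right (c := y.2) ?_
  refine hT.asim_trans (hT.sim_d_right_comm hx₁ hz₂ hy₂).asim ?_
  refine hT.asim_trans (hT.asim_d h₁ (asim_refl hz₂)) ?_
  refine hT.asim_trans (hT.sim_d_right_comm hy₁ hx₂ hz₂).asim ?_
  refine hT.asim_trans (hT.asim_d h₂ (asim_refl hx₂)) ?_
  exact (hT.sim_d_right_comm hz₁ hy₂ hx₂).asim

theorem CondT.krel_kadd (hT : A.CondT) (h₁ : A.Krel x x') (h₂ : A.Krel y y') :
    A.Krel (kadd x y) (kadd x' y') := by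
  obtain ⟨⟨hx₁, hx₂⟩, hx'₁, hx'₂⟩ := h₁.isOPPair
  obtain ⟨⟨hy₁, hy₂⟩, hy'₁, hy'₂⟩ := h₂.isOPPair
  exact hT.asim_trans (hT.sim_d_d_d_comm hx₁ hy₁ hx'₂ hy'₂).asim <|
    hT.asim_trans (hT.asim_d h₁ h₂) (hT.sim_d_d_d_comm hx'₁ hx₂ hy'₁ hy₂).asim

theorem CondT.krel_cancel_right (hT : A.CondT)
    (h : A.Krel (kadd x (c, OPE.zero V)) (kadd y (c, OPE.zero V))) : A.Krel x y := by
  obtain ⟨⟨hx₁, hx₂⟩, hy₁, hy₂⟩ := h.isOPPair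
  obtain ⟨hx₁, hc⟩ := isOPE_d_iff.mp hx₁
  have hz := isOPE_zero A
  refine hT.asim_cancel_right (c := c.d (OPE.zero V)) ?_
  exact hT.asim_trans (hT.sim_d_d_d_comm hx₁ (isOPE_d_iff.mp hy₂).1 hc hz).asim <|
    hT.asim_trans h (hT.sim_d_d_d_comm (isOPE_d_iff.mp hy₁).1 hc (isOPE_d_iff.mp hx₂).1 hz).asim

theorem CondT.krel_sub_add_cancel (hT : A.CondT) (hp : A.IsOPE p) (hq : A.IsOPE q) :
    A.Krel (kadd (p, q) (q, OPE.zero V)) (kadd (p, OPE.zero V) kzero) :=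
  (hT.sim_d_d_d_comm hp hq (isOPE_zero A) (isOPE_zero A)).asim

end AMOUS

section Maps

variable {V W : Type*} [AddCommGroup V] [Module ℂ V] [AddCommGroup W] [Module ℂ W]
variable (φ : V →ₗ[ℂ] W)

@[simp] theorem mmap_zero {m n : ℕ} : mmap φ (0 : Matrix (Fin m) (Fin n) V) = 0 := by
  ext; simp [mmap]

theorem mmap_sub {m n : ℕ} (u v : Matrix (Fin m) (Fin n) V) :
    mmap φ (u - v) = mmap φ u - mmap φ v := by
  ext; simp [mmap]

theorem mmap_smul {m n : ℕ} (c : ℂ) (v : Matrix (Fin m) (Fin n) V) :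
    mmap φ (c • v) = c • mmap φ v := by
  ext; simp [mmap]

theorem mmap_submatrix {m n m' n' : ℕ} (v : Matrix (Fin m) (Fin n) V) (f : Fin m' → Fin m)
    (g : Fin n' → Fin n) : mmap φ (v.submatrix f g) = (mmap φ v).submatrix f g :=
  rfl

theorem mmap_dsum {m n r s : ℕ} (v : Matrix (Fin m) (Fin n) V) (w : Matrix (Fin r) (Fin s) V) :
    mmap φ (dsum v w) = dsum (mmap φ v) (mmap φ w) := by
  ext; simp only [mmap, dsum]; split_ifs <;> simp

theorem mmap_diagE (x : V) (n : ℕ) : mmap φ (diagE x n) = diagE (φ x) n := by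
  ext; simp only [mmap, diagE, Matrix.of_apply]; split_ifs <;> simp

theorem mmapOPE_d (p q : OPE V) :
    mmapOPE φ (p.d q) = (mmapOPE φ p).d (mmapOPE φ q) :=
  congrArg (Sigma.mk _) (mmap_dsum φ p.2 q.2)

theorem mmapOPE_zero : mmapOPE φ (OPE.zero V) = OPE.zero W :=
  congrArg (Sigma.mk 1) (mmap_zero φ)

theorem mmapOPE_id (p : OPE V) : mmapOPE LinearMap.id p = p :=
  rfl

theorem mmapOPE_comp {U : Type*} [AddCommGroup U] [Module ℂ U] (ψ : W →ₗ[ℂ] U) (p : OPE V) :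
    mmapOPE (ψ ∘ₗ φ) p = mmapOPE ψ (mmapOPE φ p) :=
  rfl

variable {φ} [StarAddMonoid V] [StarAddMonoid W]

theorem mmap_mstar (hφstar : ∀ v : V, φ (star v) = star (φ v)) {m n : ℕ}
    (v : Matrix (Fin m) (Fin n) V) : mmap φ (mstar v) = mstar (mmap φ v) := by
  ext; simp [mmap, mstar, hφstar]

variable [StarModule ℂ V] [StarModule ℂ W] {A : AMOUS V} {B : AMOUS W}

open AMOUS

/-- Complete `|·|`-preservation is stated for square matrices; a rectangular `v` is padded to the
square matrix `v ⊕ 0`, whose absolute value is `|v| ⊕ 0`. -/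
theorem abs_mmap_of_cAbsPres (hφ : CAbsPres A B φ) {m n : ℕ} (v : Matrix (Fin m) (Fin n) V) :
    B.abs m n (mmap φ v) = mmap φ (A.abs m n v) := by
  have h := hφ (n + m) ((dsum v (0 : Matrix (Fin n) (Fin m) V)).submatrix
    (finCongr (Nat.add_comm n m)) id)
  rw [mmap_submatrix, mmap_dsum, mmap_zero, B.abs_submatrix_equiv_id, B.abs_dsum, B.abs_zero,
    A.abs_submatrix_equiv_id, A.abs_dsum, A.abs_zero, mmap_dsum, mmap_zero] at h
  exact (dsum_inj.mp h).1

theorem AMOUS.IsOP.mmap_of_cAbsPres {n : ℕ} {p : Matrix (Fin n) (Fin n) V} (hp : A.IsOP n p)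
    (hφstar : ∀ v : V, φ (star v) = star (φ v)) (hφ : CAbsPres A B φ)
    (hφe : B.IsOP 1 (mmap φ (A.eN 1))) : B.IsOP n (mmap φ p) := by
  have hφeN : B.IsOP n (mmap φ (A.eN n)) := by
    rw [eN, mmap_diagE] at hφe ⊢
    exact isOP_diagE hφe n
  refine isOP_of_abs_two_smul_sub_eq hφeN (by rw [← mmap_mstar hφstar, hp.1]) ?_
  rw [← mmap_smul, ← mmap_sub, hφ, hp.2]

theorem AMOUS.IsPI.mmap_of_cAbsPres {m n : ℕ} {v : Matrix (Fin m) (Fin n) V} (hv : A.IsPI v)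
    (hφstar : ∀ v : V, φ (star v) = star (φ v)) (hφ : CAbsPres A B φ)
    (hφe : B.IsOP 1 (mmap φ (A.eN 1))) : B.IsPI (mmap φ v) := by
  rw [IsPI, ← mmap_mstar hφstar, abs_mmap_of_cAbsPres hφ, abs_mmap_of_cAbsPres hφ]
  exact ⟨hv.1.mmap_of_cAbsPres hφstar hφ hφe, hv.2.mmap_of_cAbsPres hφstar hφ hφe⟩

theorem AMOUS.Sim.mmap_of_cAbsPres {p q : OPE V} (h : A.Sim p q)
    (hφstar : ∀ v : V, φ (star v) = star (φ v)) (hφ : CAbsPres A B φ)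
    (hφe : B.IsOP 1 (mmap φ (A.eN 1))) : B.Sim (mmapOPE φ p) (mmapOPE φ q) := by
  obtain ⟨v, hv, hp, hq⟩ := h
  refine ⟨mmap φ v, hv.mmap_of_cAbsPres hφstar hφ hφe, ?_, ?_⟩
  · show mmap φ p.2 = B.abs q.1 p.1 (mstar (mmap φ v))
    rw [← mmap_mstar hφstar, abs_mmap_of_cAbsPres hφ, ← hp]
  · show mmap φ q.2 = B.abs p.1 q.1 (mmap φ v)
    rw [abs_mmap_of_cAbsPres hφ, ← hq]

theorem AMOUS.Krel.mmap_of_cAbsPres {x y : OPE V × OPE V} (h : A.Krel x y)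
    (hφstar : ∀ v : V, φ (star v) = star (φ v)) (hφ : CAbsPres A B φ)
    (hφe : B.IsOP 1 (mmap φ (A.eN 1))) :
    B.Krel (mmapOPE φ x.1, mmapOPE φ x.2) (mmapOPE φ y.1, mmapOPE φ y.2) := by
  obtain ⟨r, hr, hs⟩ := h
  refine ⟨mmapOPE φ r, IsOP.mmap_of_cAbsPres hr hφstar hφ hφe, ?_⟩
  simpa only [mmapOPE_d] using hs.mmap_of_cAbsPres hφstar hφ hφe

theorem k0HomProp_mmapOPE (hφstar : ∀ v : V, φ (star v) = star (φ v)) (hφ : CAbsPres A B φ)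
    (hφe : B.IsOP 1 (mmap φ (A.eN 1))) :
    K0HomProp A B φ fun x => (mmapOPE φ x.1, mmapOPE φ x.2) := by
  have hOPE : ∀ {p : OPE V}, A.IsOPE p → B.IsOPE (mmapOPE φ p) :=
    fun hp => IsOP.mmap_of_cAbsPres hp hφstar hφ hφe
  refine ⟨fun x hx => ⟨hOPE hx.1, hOPE hx.2⟩, fun x y _ _ h => h.mmap_of_cAbsPres hφstar hφ hφe,
    fun x y hx hy => ?_, fun p hp => ?_⟩
  · simp only [kadd, mmapOPE_d]
    exact krel_refl ⟨isOPE_d (hOPE hx.1) (hOPE hy.1), isOPE_d (hOPE hx.2) (hOPE hy.2)⟩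
  · dsimp only
    rw [mmapOPE_zero]
    exact krel_refl ⟨hOPE hp, isOPE_zero B⟩

end Maps

section K0Hom

variable {V W U : Type*} [AddCommGroup V] [Module ℂ V] [StarAddMonoid V] [StarModule ℂ V]
  [AddCommGroup W] [Module ℂ W] [StarAddMonoid W] [StarModule ℂ W]
  [AddCommGroup U] [Module ℂ U] [StarAddMonoid U] [StarModule ℂ U]
variable {A : AMOUS V} {B : AMOUS W} {C : AMOUS U} {φ : V →ₗ[ℂ] W}
  {G G' : OPE V × OPE V → OPE W × OPE W}

open AMOUS

theorem K0HomProp.krel_kadd_mmapOPE (hTA : A.CondT) (hTB : B.CondT) (hG : K0HomProp A B φ G)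
    {p q : OPE V} (hp : A.IsOPE p) (hq : A.IsOPE q) :
    B.Krel (kadd (G (p, q)) (mmapOPE φ q, OPE.zero W)) (kadd (mmapOPE φ p, OPE.zero W) kzero) := by
  obtain ⟨hpair, hrel, hadd, hcomm⟩ := hG
  have hz := isOPE_zero A
  have hcancel := hTA.krel_sub_add_cancel hp hq
  have hzero : B.Krel (G kzero) kzero := by simpa only [mmapOPE_zero, kzero] using hcomm _ hz
  -- `G(p,q) + (φq,0) ≡ G(p,q) + G(q,0) ≡ G((p,q) + (q,0)) ≡ G((p,0) + 0) ≡ (φp,0) + 0`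
  refine hTB.krel_trans (hTB.krel_kadd (krel_refl (hpair _ ⟨hp, hq⟩)) (hcomm q hq).symm) ?_
  refine hTB.krel_trans (hadd _ _ ⟨hp, hq⟩ ⟨hq, hz⟩).symm ?_
  refine hTB.krel_trans (hrel _ _ hcancel.isOPPair.1 hcancel.isOPPair.2 hcancel) ?_
  exact hTB.krel_trans (hadd _ _ ⟨hp, hz⟩ ⟨hz, hz⟩) (hTB.krel_kadd (hcomm p hp) hzero)

theorem K0HomProp.unique (hTA : A.CondT) (hTB : B.CondT) (hG : K0HomProp A B φ G)
    (hG' : K0HomProp A B φ G') {x : OPE V × OPE V} (hx : A.IsOPPair x) : B.Krel (G x) (G' x) :=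
  hTB.krel_cancel_right <| hTB.krel_trans (hG.krel_kadd_mmapOPE hTA hTB hx.1 hx.2)
    (hG'.krel_kadd_mmapOPE hTA hTB hx.1 hx.2).symm

theorem k0HomProp_id : K0HomProp A A LinearMap.id fun x => x :=
  ⟨fun _ hx => hx, fun _ _ _ _ h => h,
    fun _ _ hx hy => krel_refl ⟨isOPE_d hx.1 hy.1, isOPE_d hx.2 hy.2⟩,
    fun p hp => by rw [mmapOPE_id]; exact krel_refl ⟨hp, isOPE_zero A⟩⟩

theorem K0HomProp.comp {ψ : W →ₗ[ℂ] U} {Fφ : OPE V × OPE V → OPE W × OPE W}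
    {Fψ : OPE W × OPE W → OPE U × OPE U} (hTC : C.CondT) (hFφ : K0HomProp A B φ Fφ)
    (hFψ : K0HomProp B C ψ Fψ) : K0HomProp A C (ψ ∘ₗ φ) (Fψ ∘ Fφ) := by
  obtain ⟨hpairφ, hrelφ, haddφ, hcommφ⟩ := hFφ
  obtain ⟨hpairψ, hrelψ, haddψ, hcommψ⟩ := hFψ
  refine ⟨fun x hx => hpairψ _ (hpairφ _ hx),
    fun x y hx hy h => hrelψ _ _ (hpairφ _ hx) (hpairφ _ hy) (hrelφ _ _ hx hy h),
    fun x y hx hy => ?_, fun p hp => ?_⟩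
  · have h := haddφ x y hx hy
    exact hTC.krel_trans (hrelψ _ _ h.isOPPair.1 h.isOPPair.2 h)
      (haddψ _ _ (hpairφ _ hx) (hpairφ _ hy))
  · have h := hcommφ p hp
    exact hTC.krel_trans (hrelψ _ _ h.isOPPair.1 h.isOPPair.2 h)
      (mmapOPE_comp φ ψ p ▸ hcommψ _ h.isOPPair.2.1)

end K0Hom

theorem statement17_general {V W U : Type*} [AddCommGroup V] [Module ℂ V] [StarAddMonoid V]
    [StarModule ℂ V] [AddCommGroup W] [Module ℂ W] [StarAddMonoid W] [StarModule ℂ W]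
    [AddCommGroup U] [Module ℂ U] [StarAddMonoid U] [StarModule ℂ U]
    (A : AMOUS V) (B : AMOUS W) (Cu : AMOUS U)
    (hAT : A.CondT) (hBT : B.CondT) (hUT : Cu.CondT)
    (φ : V →ₗ[ℂ] W) (hφstar : ∀ v : V, φ (star v) = star (φ v))
    (hφ : CAbsPres A B φ) (hφe : B.IsOP 1 (mmap φ (A.eN 1))) :
    -- existence and uniqueness of `K₀(φ)` with the commuting diagram
    (∃ F : OPE V × OPE V → OPE W × OPE W, K0HomProp A B φ F ∧
      ∀ G : OPE V × OPE V → OPE W × OPE W, K0HomProp A B φ G →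
        ∀ x : OPE V × OPE V, A.IsOPPair x → B.Krel (F x) (G x)) ∧
    -- `K₀(id_V) = id_{K₀(V)}`
    (∀ F : OPE V × OPE V → OPE V × OPE V, K0HomProp A A LinearMap.id F →
      ∀ x : OPE V × OPE V, A.IsOPPair x → A.Krel (F x) x) ∧
    -- `K₀(ψ ∘ φ) = K₀(ψ) ∘ K₀(φ)` for unital maps
    (∀ ψ : W →ₗ[ℂ] U, (∀ w : W, ψ (star w) = star (ψ w)) → CAbsPres B Cu ψ →
      φ A.e = B.e → ψ B.e = Cu.e →
      ∀ (Fφ : OPE V × OPE V → OPE W × OPE W) (Fψ : OPE W × OPE W → OPE U × OPE U)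
        (Fc : OPE V × OPE V → OPE U × OPE U),
        K0HomProp A B φ Fφ → K0HomProp B Cu ψ Fψ → K0HomProp A Cu (ψ ∘ₗ φ) Fc →
        ∀ x : OPE V × OPE V, A.IsOPPair x → Cu.Krel (Fc x) (Fψ (Fφ x))) := by
  have hF := k0HomProp_mmapOPE hφstar hφ hφe
  refine ⟨⟨_, hF, fun G hG x hx => hF.unique hAT hBT hG hx⟩,
    fun F hF' x hx => hF'.unique hAT hAT k0HomProp_id hx, ?_⟩
  intro ψ _ _ _ _ Fφ Fψ Fc hFφ hFψ hFc x hx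
  exact hFc.unique hAT hUT (hFφ.comp hUT hFψ) hx

/-- Functoriality of `K₀`: a completely `|·|`-preserving map
`φ : V → W` with `φ(e_V)` an order projection induces a unique group homomorphism
`K₀(φ) : K₀(V) → K₀(W)` with `K₀(φ)([(p,0)]) = [(φ(p),0)]`; moreover `K₀(id) = id`
and `K₀(ψ ∘ φ) = K₀(ψ) ∘ K₀(φ)` for unital completely `|·|`-preserving maps.
(A group homomorphism `K₀(V) → K₀(W)` is encoded as a map `F` on representatives
which preserves order-projection pairs, respects `≡`, is additive, and makes the
diagram `χ_W ∘ φ = K₀(φ) ∘ χ_V` commute; equality of homomorphisms is equality of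
the induced maps on classes.) -/
theorem statement17 {V W U : Type*} [AddCommGroup V] [Module ℂ V] [StarAddMonoid V]
    [StarModule ℂ V] [AddCommGroup W] [Module ℂ W] [StarAddMonoid W] [StarModule ℂ W]
    [AddCommGroup U] [Module ℂ U] [StarAddMonoid U] [StarModule ℂ U]
    (A : AMOUS V) (B : AMOUS W) (Cu : AMOUS U)
    (hAabs : A.IsAbsolute) (hBabs : B.IsAbsolute) (hUabs : Cu.IsAbsolute)
    (hAT : A.CondT) (hBT : B.CondT) (hUT : Cu.CondT)
    (φ : V →ₗ[ℂ] W) (hφstar : ∀ v : V, φ (star v) = star (φ v))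
    (hφ : CAbsPres A B φ) (hφe : B.IsOP 1 (mmap φ (A.eN 1))) :
    -- existence and uniqueness of `K₀(φ)` with the commuting diagram
    (∃ F : OPE V × OPE V → OPE W × OPE W, K0HomProp A B φ F ∧
      ∀ G : OPE V × OPE V → OPE W × OPE W, K0HomProp A B φ G →
        ∀ x : OPE V × OPE V, A.IsOPPair x → B.Krel (F x) (G x)) ∧
    -- `K₀(id_V) = id_{K₀(V)}`
    (∀ F : OPE V × OPE V → OPE V × OPE V, K0HomProp A A LinearMap.id F →
      ∀ x : OPE V × OPE V, A.IsOPPair x → A.Krel (F x) x) ∧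
    -- `K₀(ψ ∘ φ) = K₀(ψ) ∘ K₀(φ)` for unital maps
    (∀ ψ : W →ₗ[ℂ] U, (∀ w : W, ψ (star w) = star (ψ w)) → CAbsPres B Cu ψ →
      φ A.e = B.e → ψ B.e = Cu.e →
      ∀ (Fφ : OPE V × OPE V → OPE W × OPE W) (Fψ : OPE W × OPE W → OPE U × OPE U)
        (Fc : OPE V × OPE V → OPE U × OPE U),
        K0HomProp A B φ Fφ → K0HomProp B Cu ψ Fψ → K0HomProp A Cu (ψ ∘ₗ φ) Fc →
        ∀ x : OPE V × OPE V, A.IsOPPair x → Cu.Krel (Fc x) (Fψ (Fφ x))) :=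
  statement17_general A B Cu hAT hBT hUT φ hφstar hφ hφe
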